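/- If μ is a time-consistent reconciliation map from (T;t,σ) to S with witnessing time maps τ_T, τ_S, then τ_T and τ_S also satisfy conditions (D1), (D2), and (D3). -/

import Mathlib

/-- A rooted tree on vertex type `V`, encoded by a parent map.
Edges are directed away from the root; the edge into a non-root vertex `v`
is `(par v, v)`. -/
structure RTree (V : Type*) where
  root : V
  par : V → V
  par_root : par root = root
  par_ne : ∀ v, v ≠ root → par v ≠ v
  reaches : ∀ v, ∃ k, par^[k] v = root

namespace RTree

variable {V : Type*}

/-- `anc T x y` : `x` is a descendant of `y`, i.e. `x ⪯_T y`. -/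
def anc (T : RTree V) (x y : V) : Prop := ∃ k, (T.par)^[k] x = y

/-- strict descendant: `x ≺_T y`. -/
def sanc (T : RTree V) (x y : V) : Prop := T.anc x y ∧ x ≠ y

def IsLeaf (T : RTree V) (v : V) : Prop := ∀ u, T.par u = v → u = v

/-- `x` is a least common ancestor of the set `A`. -/
def IsLca (T : RTree V) (A : Set V) (x : V) : Prop :=
  (∀ a ∈ A, T.anc a x) ∧ ∀ y, (∀ a ∈ A, T.anc a y) → T.anc x y

/-- A time map: strict descendants have strictly larger time stamps. -/
def IsTimeMap (T : RTree V) (τ : V → ℝ) : Prop :=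
  ∀ x y, T.sanc x y → τ y < τ x

end RTree

/-- Event labels: speciation `•`, duplication `□`, HGT `△`, leaf `⊙`. -/
inductive Event where
  | spec | dup | hgt | leaf
deriving DecidableEq

/-- The common setup: a gene tree `T` (vertices `V`) with event labels `t`,
transfer edges `trans` (an edge is recorded by its child endpoint),
a species tree `S` (vertices `W`), the map `sig = σ` assigning to each gene
(leaf of `T`) the species (leaf of `S`) it resides in, and a least common
ancestor function `lca` on the species tree. -/
structure ReconSetup (V W : Type*) where
  T : RTree V
  S : RTree W
  t : V → Event
  trans : Set V
  sig : V → W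
  lca : Set W → W
  trans_ne_root : ∀ v ∈ trans, v ≠ T.root
  trans_hgt : ∀ v ∈ trans, t (T.par v) = Event.hgt
  leaf_iff : ∀ v, T.IsLeaf v ↔ t v = Event.leaf
  sig_leaf : ∀ v, T.IsLeaf v → S.IsLeaf (sig v)
  lca_spec : ∀ A : Set W, A.Nonempty → S.IsLca A (lca A)

/-- lower endpoint of a vertex-or-edge of the species tree
(an edge `(S.par y, y)` is encoded as `Sum.inr y`; a vertex `x` as `Sum.inl x`). -/
def lowPt {W : Type*} : W ⊕ W → W := Sum.elim id id

namespace ReconSetup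

variable {V W : Type*}

/-- ancestor order of the forest `T_{E̅}` obtained by deleting transfer edges. -/
def fanc (R : ReconSetup V W) (x y : V) : Prop :=
  ∃ k, (R.T.par)^[k] x = y ∧ ∀ i < k, (R.T.par)^[i] x ∉ R.trans

def sfanc (R : ReconSetup V W) (x y : V) : Prop := R.fanc x y ∧ x ≠ y

/-- `σ_{T̅}(u)`: the species of the leaves of `T` below `u` in the forest `T_{E̅}`. -/
def sigmaBar (R : ReconSetup V W) (u : V) : Set W :=
  R.sig '' {l | R.T.IsLeaf l ∧ R.fanc l u}

/-- Ancestor order of `S` extended to vertices and edges: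
`z ⪯ (x,y) ↔ z ⪯ y`, `(x,y) ⪯ z ↔ x ⪯ z`, `(x,y) ⪯ (a,b) ↔ y ⪯ b`. -/
def extLE (R : ReconSetup V W) : W ⊕ W → W ⊕ W → Prop
  | Sum.inl a, Sum.inl b => R.S.anc a b
  | Sum.inl a, Sum.inr y => R.S.anc a y
  | Sum.inr y, Sum.inl b => R.S.anc (R.S.par y) b
  | Sum.inr y, Sum.inr z => R.S.anc y z

def extLT (R : ReconSetup V W) (p q : W ⊕ W) : Prop := R.extLE p q ∧ ¬ R.extLE q p

def incomp (R : ReconSetup V W) (p q : W ⊕ W) : Prop := ¬ R.extLE p q ∧ ¬ R.extLE q p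

def IsDupHGT (R : ReconSetup V W) (u : V) : Prop :=
  R.t u = Event.dup ∨ R.t u = Event.hgt

/-- (M1) leaf constraint. -/
def M1 (R : ReconSetup V W) (μ : V → W ⊕ W) : Prop :=
  ∀ u, R.T.IsLeaf u → μ u = Sum.inl (R.sig u)

/-- (M2i) speciation vertices map to the lca of the species below them. -/
def M2i (R : ReconSetup V W) (μ : V → W ⊕ W) : Prop :=
  ∀ u, R.t u = Event.spec → μ u = Sum.inl (R.lca (R.sigmaBar u))

/-- (M2ii) duplication/HGT vertices map to edges of `S`. -/
def M2ii (R : ReconSetup V W) (μ : V → W ⊕ W) : Prop :=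
  ∀ u, R.IsDupHGT u → ∃ y, y ≠ R.S.root ∧ μ u = Sum.inr y

/-- (M2iii) the endpoints of a transfer edge receive incomparable images. -/
def M2iii (R : ReconSetup V W) (μ : V → W ⊕ W) : Prop :=
  ∀ v ∈ R.trans, R.incomp (μ (R.T.par v)) (μ v)

/-- (M3) ancestor constraint within components of `T_{E̅}`. -/
def M3 (R : ReconSetup V W) (μ : V → W ⊕ W) : Prop :=
  ∀ v w, R.sfanc v w →
    ((R.IsDupHGT v ∧ R.IsDupHGT w) → R.extLE (μ v) (μ w)) ∧
    (¬ (R.IsDupHGT v ∧ R.IsDupHGT w) → R.extLT (μ v) (μ w))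

/-- `μ` is a reconciliation map from `(T;t,σ)` to `S`. -/
def IsRecon (R : ReconSetup V W) (μ : V → W ⊕ W) : Prop :=
  R.M1 μ ∧ R.M2i μ ∧ R.M2ii μ ∧ R.M2iii μ ∧ R.M3 μ

/-- (O1) every internal vertex has at least two children. -/
def O1 (R : ReconSetup V W) : Prop :=
  ∀ v, ¬ R.T.IsLeaf v →
    ∃ a b, a ≠ b ∧ R.T.par a = v ∧ R.T.par b = v ∧ a ≠ v ∧ b ≠ v

/-- (O2) every HGT vertex has a transfer child edge and a non-transfer child edge. -/
def O2 (R : ReconSetup V W) : Prop :=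
  ∀ v, R.t v = Event.hgt →
    (∃ c, R.T.par c = v ∧ c ∈ R.trans) ∧ (∃ c, R.T.par c = v ∧ c ≠ v ∧ c ∉ R.trans)

/-- (Σ1) a speciation vertex has two children whose species sets are disjoint. -/
def Sigma1 (R : ReconSetup V W) : Prop :=
  ∀ x, R.t x = Event.spec →
    ∃ v w, v ≠ w ∧ R.T.par v = x ∧ R.T.par w = x ∧ v ≠ x ∧ w ≠ x ∧
      R.sigmaBar v ∩ R.sigmaBar w = ∅

/-- (Σ2) the species sets across a transfer edge are disjoint. -/
def Sigma2 (R : ReconSetup V W) : Prop :=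
  ∀ w ∈ R.trans, R.sigmaBar (R.T.par w) ∩ R.sigmaBar w = ∅

/-- the gene tree is binary. -/
def BinaryT (R : ReconSetup V W) : Prop :=
  ∀ v, ¬ R.T.IsLeaf v →
    ∃ a b, a ≠ b ∧ ∀ c, (R.T.par c = v ∧ c ≠ v) ↔ (c = a ∨ c = b)

/-- the species tree is binary. -/
def BinaryS (R : ReconSetup V W) : Prop :=
  ∀ v, ¬ R.S.IsLeaf v →
    ∃ a b, a ≠ b ∧ ∀ c, (R.S.par c = v ∧ c ≠ v) ↔ (c = a ∨ c = b)

/-- (C1) speciation vertices and leaves get the same time as their image. -/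
def C1 (R : ReconSetup V W) (μ : V → W ⊕ W) (τT : V → ℝ) (τS : W → ℝ) : Prop :=
  ∀ u x, (R.t u = Event.spec ∨ R.t u = Event.leaf) → μ u = Sum.inl x → τT u = τS x

/-- (C2) a vertex mapped into an edge `(x,y)` gets a time strictly between
the times of `x` and `y`. -/
def C2 (R : ReconSetup V W) (μ : V → W ⊕ W) (τT : V → ℝ) (τS : W → ℝ) : Prop :=
  ∀ u y, R.IsDupHGT u → μ u = Sum.inr y → τS (R.S.par y) < τT u ∧ τT u < τS y

/-- `μ` is a time-consistent reconciliation map. -/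
def TimeConsistent (R : ReconSetup V W) (μ : V → W ⊕ W) : Prop :=
  ∃ τT τS, R.T.IsTimeMap τT ∧ R.S.IsTimeMap τS ∧ R.C1 μ τT τS ∧ R.C2 μ τT τS

/-- (D1). -/
def D1 (R : ReconSetup V W) (μ : V → W ⊕ W) (τT : V → ℝ) (τS : W → ℝ) : Prop :=
  ∀ u x, μ u = Sum.inl x → τT u = τS x

/-- (D2). -/
def D2 (R : ReconSetup V W) (τT : V → ℝ) (τS : W → ℝ) : Prop :=
  ∀ u x, R.IsDupHGT u → R.S.anc x (R.lca (R.sigmaBar u)) → τT u < τS x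

/-- (D3), for a transfer edge `(T.par v, v)` with `v ∈ trans`. -/
def D3 (R : ReconSetup V W) (τT : V → ℝ) (τS : W → ℝ) : Prop :=
  ∀ v x, v ∈ R.trans →
    R.S.anc (R.lca (R.sigmaBar (R.T.par v) ∪ R.sigmaBar v)) x → τS x < τT (R.T.par v)

/-- The DTL-scenario axioms (I)-(IV) for a map `γ : V(T) → V(S)`. -/
def DTL (R : ReconSetup V W) (γ : V → W) : Prop :=
  (∀ u, R.T.IsLeaf u → γ u = R.sig u) ∧
  (∀ u v w, v ≠ w → R.T.par v = u → R.T.par w = u → v ≠ u → w ≠ u →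
    ((¬ R.S.sanc (γ u) (γ v) ∧ ¬ R.S.sanc (γ u) (γ w)) ∧
     (R.S.anc (γ v) (γ u) ∨ R.S.anc (γ w) (γ u)))) ∧
  (∀ v, v ≠ R.T.root →
    (v ∈ R.trans ↔ (¬ R.S.anc (γ (R.T.par v)) (γ v) ∧ ¬ R.S.anc (γ v) (γ (R.T.par v))))) ∧
  (∀ u v w, v ≠ w → R.T.par v = u → R.T.par w = u → v ≠ u → w ≠ u →
    ((R.t u = Event.hgt ↔ (v ∈ R.trans ∨ w ∈ R.trans)) ∧
     (R.t u = Event.spec →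
       γ u = R.lca {γ v, γ w} ∧ ¬ R.S.anc (γ v) (γ w) ∧ ¬ R.S.anc (γ w) (γ v)) ∧
     (R.t u = Event.dup → R.S.anc (R.lca {γ v, γ w}) (γ u))))

end ReconSetup

/-- A directed graph (relation) is acyclic: no edge closes a directed cycle. -/
def Acyclic {α : Type*} (r : α → α → Prop) : Prop :=
  ∀ x y, r x y → ¬ Relation.ReflTransGen r y x

/-! Every species of `σ̄(u)` lies below `μ(u)` by (M1) and (M3), and `σ̄(u)` is nonempty by (O1),
(O2) and finiteness, so `lca σ̄(u) ⪯ μ(u)`; with (C2) and the monotonicity of `τ_S` this gives (D2),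
while (D1) is (C1) because (M2ii) sends duplications and transfers to edges.
For (D3), let `μ(par v) = (par y, y)` and `z = lca (σ̄(par v) ∪ σ̄(v))`. A species of `σ̄(par v)`
lies below both `y` and `z`, so they are comparable; `z ⪯ y` would put a species of `σ̄(v)` below
both `μ(par v)` and `μ(v)`, making them comparable against (M2iii). Hence `y ≺ z`, so `par y ⪯ z`
and (C2) gives `τ_S(z) ≤ τ_S(par y) < τ_T(par v)`. -/

namespace RTree

variable {V : Type*} (T : RTree V)

theorem anc_refl (a : V) : T.anc a a := ⟨0, rfl⟩

variable {T}

theorem anc_trans {a b c : V} (hab : T.anc a b) (hbc : T.anc b c) : T.anc a c := by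
  obtain ⟨k, rfl⟩ := hab
  obtain ⟨j, rfl⟩ := hbc
  exact ⟨j + k, Function.iterate_add_apply _ _ _ _⟩

theorem eq_root_of_isPeriodicPt {n : ℕ} (hn : 0 < n) {a : V}
    (ha : Function.IsPeriodicPt T.par n a) : a = T.root := by
  obtain ⟨m, hm⟩ := T.reaches a
  calc a = T.par^[n * m] a := (ha.mul_const m).symm
    _ = T.par^[n * m - m + m] a := by rw [Nat.sub_add_cancel (Nat.le_mul_of_pos_left m hn)]
    _ = T.par^[n * m - m] T.root := by rw [Function.iterate_add_apply, hm]
    _ = T.root := Function.iterate_fixed T.par_root _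

theorem anc_antisymm {a b : V} (hab : T.anc a b) (hba : T.anc b a) : a = b := by
  obtain ⟨k, rfl⟩ := hab
  obtain ⟨j, hj⟩ := hba
  rcases Nat.eq_zero_or_pos (j + k) with hjk | hjk
  · rw [Nat.eq_zero_of_add_eq_zero_left hjk, Function.iterate_zero_apply]
  · have hroot : a = T.root :=
      eq_root_of_isPeriodicPt hjk (by rw [Function.IsPeriodicPt, Function.IsFixedPt,
        Function.iterate_add_apply, hj])
    rw [hroot, Function.iterate_fixed T.par_root]

theorem anc_or_anc_of_anc {a x y : V} (hx : T.anc a x) (hy : T.anc a y) :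
    T.anc x y ∨ T.anc y x := by
  obtain ⟨k, rfl⟩ := hx
  obtain ⟨j, rfl⟩ := hy
  rcases le_total k j with h | h
  · exact Or.inl ⟨j - k, by rw [← Function.iterate_add_apply, Nat.sub_add_cancel h]⟩
  · exact Or.inr ⟨k - j, by rw [← Function.iterate_add_apply, Nat.sub_add_cancel h]⟩

theorem anc_par_of_anc_of_ne {a b : V} (hab : T.anc a b) (hne : a ≠ b) : T.anc (T.par a) b := by
  obtain ⟨_ | m, rfl⟩ := hab
  · exact absurd rfl hne
  · exact ⟨m, (Function.iterate_succ_apply _ _ _).symm⟩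

theorem sanc_trans {a b c : V} (hab : T.sanc a b) (hbc : T.sanc b c) : T.sanc a c := by
  refine ⟨anc_trans hab.1 hbc.1, ?_⟩
  rintro rfl
  exact hab.2 (anc_antisymm hab.1 hbc.1)

theorem wellFounded_sanc [Finite V] (T : RTree V) : WellFounded T.sanc :=
  haveI : IsTrans V T.sanc := ⟨fun _ _ _ => sanc_trans⟩
  haveI : Std.Irrefl T.sanc := ⟨fun _ h => h.2 rfl⟩
  Finite.wellFounded_of_trans_of_irrefl _

theorem IsTimeMap.le_of_anc {τ : V → ℝ} (hτ : T.IsTimeMap τ) {a b : V} (hab : T.anc a b) :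
    τ b ≤ τ a := by
  by_cases h : a = b
  · rw [h]
  · exact (hτ a b ⟨hab, h⟩).le

end RTree

namespace ReconSetup

variable {V W : Type*} (R : ReconSetup V W) {μ : V → W ⊕ W}

theorem exists_child_not_mem_trans (hO1 : R.O1) (hO2 : R.O2) {u : V} (hu : ¬ R.T.IsLeaf u) :
    ∃ c, R.T.par c = u ∧ c ≠ u ∧ c ∉ R.trans := by
  by_cases hhgt : R.t u = Event.hgt
  · obtain ⟨-, c, hc⟩ := hO2 u hhgt
    exact ⟨c, hc⟩
  · obtain ⟨a, -, -, rfl, -, hau, -⟩ := hO1 u hu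
    exact ⟨a, rfl, hau, fun ha => hhgt (R.trans_hgt a ha)⟩

theorem exists_leaf_fanc [Finite V] (hO1 : R.O1) (hO2 : R.O2) (u : V) :
    ∃ l, R.T.IsLeaf l ∧ R.fanc l u := by
  induction u using R.T.wellFounded_sanc.induction with
  | _ u ih =>
    by_cases hu : R.T.IsLeaf u
    · exact ⟨u, hu, 0, rfl, fun i hi => absurd hi (Nat.not_lt_zero i)⟩
    obtain ⟨c, rfl, hcu, hc⟩ := R.exists_child_not_mem_trans hO1 hO2 hu
    obtain ⟨l, hl, k, rfl, hk⟩ := ih c ⟨⟨1, rfl⟩, hcu⟩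
    refine ⟨l, hl, k + 1, Function.iterate_succ_apply' _ _ _, fun i hi => ?_⟩
    rcases Nat.lt_succ_iff_lt_or_eq.mp hi with hi | rfl
    exacts [hk i hi, hc]

theorem sigmaBar_nonempty [Finite V] (hO1 : R.O1) (hO2 : R.O2) (u : V) :
    (R.sigmaBar u).Nonempty :=
  let ⟨l, hl⟩ := R.exists_leaf_fanc hO1 hO2 u
  ⟨R.sig l, l, hl, rfl⟩

variable {R}

theorem t_eq_spec_or_leaf_of_eq_inl (hM2ii : R.M2ii μ) {u : V} {x : W} (hu : μ u = Sum.inl x) :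
    R.t u = Event.spec ∨ R.t u = Event.leaf := by
  rcases h : R.t u
  case dup | hgt =>
    obtain ⟨y, -, hy⟩ := hM2ii u (by simp [IsDupHGT, h])
    exact absurd (hu.symm.trans hy) Sum.inl_ne_inr
  all_goals simp

theorem anc_lowPt_of_mem_sigmaBar (hM1 : R.M1 μ) (hM3 : R.M3 μ) {u : V} {a : W}
    (ha : a ∈ R.sigmaBar u) : R.S.anc a (lowPt (μ u)) := by
  obtain ⟨l, ⟨hl, hlu⟩, rfl⟩ := ha
  by_cases h : l = u
  · subst h
    rw [hM1 l hl]
    exact R.S.anc_refl _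
  · have hl_not_dupHGT : ¬ R.IsDupHGT l := by
      rw [IsDupHGT, (R.leaf_iff l).mp hl]
      simp
    have hlt := ((hM3 l u ⟨hlu, h⟩).2 (fun h => hl_not_dupHGT h.1)).1
    rw [hM1 l hl] at hlt
    rcases hμ : μ u with c | c <;> rw [hμ] at hlt <;> exact hlt

theorem anc_lca_sigmaBar_lowPt [Finite V] (hO1 : R.O1) (hO2 : R.O2) (hM1 : R.M1 μ)
    (hM3 : R.M3 μ) (u : V) : R.S.anc (R.lca (R.sigmaBar u)) (lowPt (μ u)) :=
  (R.lca_spec _ (R.sigmaBar_nonempty hO1 hO2 u)).2 _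
    fun _ ha => anc_lowPt_of_mem_sigmaBar hM1 hM3 ha

theorem not_incomp_inr_of_anc {a y : W} {p : W ⊕ W} (hy : R.S.anc a y)
    (hp : R.S.anc a (lowPt p)) : ¬ R.incomp (Sum.inr y) p := by
  rintro ⟨hyp, hpy⟩
  cases p with
  | inl c =>
    rcases RTree.anc_or_anc_of_anc hy hp with h | h
    · by_cases hyc : y = c
      · exact hpy (hyc ▸ R.S.anc_refl y)
      · exact hyp (RTree.anc_par_of_anc_of_ne h hyc)
    · exact hpy h
  | inr y' => exact (RTree.anc_or_anc_of_anc hy hp).elim hyp hpy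

theorem sanc_lca_sigmaBar_union_of_mem_trans [Finite V] (hO1 : R.O1) (hO2 : R.O2)
    (hM1 : R.M1 μ) (hM2iii : R.M2iii μ) (hM3 : R.M3 μ) {v : V} (hv : v ∈ R.trans) {y : W}
    (hy : μ (R.T.par v) = Sum.inr y) :
    R.S.sanc y (R.lca (R.sigmaBar (R.T.par v) ∪ R.sigmaBar v)) := by
  set z := R.lca (R.sigmaBar (R.T.par v) ∪ R.sigmaBar v)
  obtain ⟨a, ha⟩ := R.sigmaBar_nonempty hO1 hO2 (R.T.par v)
  obtain ⟨b, hb⟩ := R.sigmaBar_nonempty hO1 hO2 v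
  have hz := (R.lca_spec (R.sigmaBar (R.T.par v) ∪ R.sigmaBar v) ⟨a, Or.inl ha⟩).1
  have hay : R.S.anc a y := by simpa [hy, lowPt] using anc_lowPt_of_mem_sigmaBar hM1 hM3 ha
  have hzy : ¬ R.S.anc z y := fun hzy =>
    not_incomp_inr_of_anc (RTree.anc_trans (hz b (Or.inr hb)) hzy)
      (anc_lowPt_of_mem_sigmaBar hM1 hM3 hb) (hy ▸ hM2iii v hv)
  refine ⟨(RTree.anc_or_anc_of_anc hay (hz a (Or.inl ha))).resolve_right hzy, ?_⟩
  rintro rfl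
  exact hzy (R.S.anc_refl _)

end ReconSetup

theorem stmt12_general {V W : Type*} [Fintype V] (R : ReconSetup V W) (μ : V → W ⊕ W)
    (hrec : R.IsRecon μ) (hO1 : R.O1) (hO2 : R.O2)
    (τT : V → ℝ) (τS : W → ℝ)
    (hτS : R.S.IsTimeMap τS)
    (hC1 : R.C1 μ τT τS) (hC2 : R.C2 μ τT τS) :
    R.D1 μ τT τS ∧ R.D2 τT τS ∧ R.D3 τT τS := by
  obtain ⟨hM1, -, hM2ii, hM2iii, hM3⟩ := hrec
  refine ⟨fun u x hu => hC1 u x (ReconSetup.t_eq_spec_or_leaf_of_eq_inl hM2ii hu) hu, ?_, ?_⟩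
  · intro u x hu hx
    obtain ⟨y, -, hy⟩ := hM2ii u hu
    have hlca : R.S.anc (R.lca (R.sigmaBar u)) y := by
      simpa [hy, lowPt] using ReconSetup.anc_lca_sigmaBar_lowPt hO1 hO2 hM1 hM3 u
    calc τT u < τS y := (hC2 u y hu hy).2
      _ ≤ τS x := hτS.le_of_anc (RTree.anc_trans hx hlca)
  · intro v x hv hx
    have hu : R.IsDupHGT (R.T.par v) := Or.inr (R.trans_hgt v hv)
    obtain ⟨y, -, hy⟩ := hM2ii _ hu
    have hyz := ReconSetup.sanc_lca_sigmaBar_union_of_mem_trans hO1 hO2 hM1 hM2iii hM3 hv hy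
    calc τS x ≤ τS (R.S.par y) :=
          hτS.le_of_anc (RTree.anc_trans (RTree.anc_par_of_anc_of_ne hyz.1 hyz.2) hx)
      _ < τT (R.T.par v) := (hC2 _ y hu hy).1

/-- if `μ` is a time-consistent reconciliation map with witnessing
time maps `τ_T, τ_S` (satisfying (C1), (C2)), then `τ_T, τ_S` also satisfy
(D1), (D2) and (D3). -/
theorem stmt12 {V W : Type*} [Fintype V] (R : ReconSetup V W) (μ : V → W ⊕ W)
    (hrec : R.IsRecon μ) (hO1 : R.O1) (hO2 : R.O2) (hS1 : R.Sigma1) (hS2 : R.Sigma2)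
    (τT : V → ℝ) (τS : W → ℝ)
    (hτT : R.T.IsTimeMap τT) (hτS : R.S.IsTimeMap τS)
    (hC1 : R.C1 μ τT τS) (hC2 : R.C2 μ τT τS) :
    R.D1 μ τT τS ∧ R.D2 τT τS ∧ R.D3 τT τS :=
  stmt12_general R μ hrec hO1 hO2 τT τS hτS hC1 hC2
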